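/- Let $p, q, r, \gamma$ be real numbers with $1 < q < p < r$ and $\gamma \in (0,1)$, and let $A, B, C, E \ge 0$ with $A + B > 0$ satisfy $A + B = C + E$ (Nehari identity). If moreover $(r+\gamma-1)E < (p+\gamma-1)A + (q+\gamma-1)B$ (i.e. the point is in $\mathcal{N}^+$), then the energy value $\frac{A}{p} + \frac{B}{q} - \frac{C}{1-\gamma} - \frac{E}{r}$ satisfies $\frac{A}{p} + \frac{B}{q} - \frac{C}{1-\gamma} - \frac{E}{r} \le \frac{p+\gamma-1}{1-\gamma}\left(\frac{1}{r} - \frac{1}{p}\right)A + \frac{q+\gamma-1}{1-\gamma}\left(\frac{1}{r} - \frac{1}{q}\right)B < 0$. -/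
import Mathlib


theorem stmt_17 (p q r γ : ℝ) (hq : 1 < q) (hqp : q < p) (hpr : p < r)
    (hγ0 : 0 < γ) (hγ1 : γ < 1)
    (A B C E : ℝ) (hA : 0 ≤ A) (hB : 0 ≤ B) (hC : 0 ≤ C) (hE : 0 ≤ E)
    (hAB : 0 < A + B) (hNehari : A + B = C + E)
    (hNplus : (r + γ - 1) * E < (p + γ - 1) * A + (q + γ - 1) * B) :
    A / p + B / q - C / (1 - γ) - E / r ≤
      (p + γ - 1) / (1 - γ) * (1 / r - 1 / p) * A +
        (q + γ - 1) / (1 - γ) * (1 / r - 1 / q) * B ∧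
    (p + γ - 1) / (1 - γ) * (1 / r - 1 / p) * A +
        (q + γ - 1) / (1 - γ) * (1 / r - 1 / q) * B < 0 := by
  have hp : (0:ℝ) < p := by linarith
  have hq' : (0:ℝ) < q := by linarith
  have hr : (0:ℝ) < r := by linarith
  have hg : (0:ℝ) < 1 - γ := by linarith
  have hCeq : C = A + B - E := by linarith
  constructor
  · have key : ((p + γ - 1) / (1 - γ) * (1 / r - 1 / p) * A +
        (q + γ - 1) / (1 - γ) * (1 / r - 1 / q) * B) -
        (A / p + B / q - C / (1 - γ) - E / r) =
        (((p + γ - 1) * A + (q + γ - 1) * B) - (r + γ - 1) * E) / ((1 - γ) * r) := by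
      subst hCeq
      field_simp
      ring
    have hpos : 0 ≤ (((p + γ - 1) * A + (q + γ - 1) * B) - (r + γ - 1) * E) / ((1 - γ) * r) := by
      apply div_nonneg (by linarith) (by positivity)
    linarith
  · have h1 : (p + γ - 1) / (1 - γ) * (1 / r - 1 / p) ≤ 0 := by
      apply mul_nonpos_of_nonneg_of_nonpos
      · exact div_nonneg (by linarith) hg.le
      · have : 1 / r < 1 / p := one_div_lt_one_div_of_lt hp hpr
        linarith
    have h2 : (q + γ - 1) / (1 - γ) * (1 / r - 1 / q) < 0 := by
      apply mul_neg_of_pos_of_neg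
      · exact div_pos (by linarith) hg
      · have : 1 / r < 1 / q := one_div_lt_one_div_of_lt hq' (by linarith)
        linarith
    rcases (lt_or_eq_of_le hB).symm with hB0 | hB0
    · have hA0 : 0 < A := by linarith [hB0 ▸ hAB]
      have h1' : (p + γ - 1) / (1 - γ) * (1 / r - 1 / p) < 0 := by
        apply mul_neg_of_pos_of_neg
        · exact div_pos (by linarith) hg
        · have : 1 / r < 1 / p := one_div_lt_one_div_of_lt hp hpr
          linarith
      nlinarith [mul_nonpos_of_nonpos_of_nonneg h2.le hB, mul_neg_of_neg_of_pos h1' hA0]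
    · nlinarith [mul_neg_of_neg_of_pos h2 hB0, mul_nonpos_of_nonpos_of_nonneg h1 hA]
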